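/- arXiv:0903.5074 — 4 statements merged into one kernel-verified Lean document; each statement's English description precedes it below -/
import Mathlib

section
/- Let m be a positive integer and B ≥ 0. For t = 1, 2, …, let x_t ∈ ℝ^m be vectors whose supports N_t := {i : x_{t,i} ≠ 0} are nondecreasing, i.e. N_t ⊆ N_{t+1} for all t. Define sets T_t ⊆ {1,…,m} recursively by T_0 = ∅ and T_t = T_{t−1} ∪ Δ̂_t, where at each t one is given a vector x̂_t ∈ ℝ^m with x̂_{t,i} = 0 for all i ∉ T_{t−1}, a vector β̂_t ∈ ℝ^m satisfying ‖x_t − x̂_t − β̂_t‖₂² ≤ B, and Δ̂_t := {i ∉ T_{t−1} : β̂_{t,i}² > B}. Then for every t ≥ 1: Δ̂_t ⊆ N_t, T_t ⊆ N_t, and T_t ∪ (N_{t+1} \ T_t) = N_{t+1}. -/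
/-! An index `i ∉ T_{t-1}` has `x̂_{t,i} = 0`, so if also `x_{t,i} = 0` the error vector has
`i`-th coordinate `-β̂_{t,i}`, whence `β̂_{t,i}² ≤ B`: only indices in the support can pass the
threshold. Induction on `t`, with the supports nondecreasing, then keeps `T_t` inside `N_t`. -/

theorem ne_zero_of_sum_sq_le_of_lt_sq {ι : Type*} [Fintype ι] {x xhat β : ι → ℝ} {B : ℝ}
    (herr : ∑ j, (x j - xhat j - β j) ^ 2 ≤ B) {i : ι} (hxhat : xhat i = 0)
    (hβ : B < β i ^ 2) : x i ≠ 0 := by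
  intro hx
  have hcoord : (x i - xhat i - β i) ^ 2 ≤ ∑ j, (x j - xhat j - β j) ^ 2 :=
    Finset.single_le_sum (fun j _ => sq_nonneg (x j - xhat j - β j)) (Finset.mem_univ i)
  rw [hx, hxhat, sub_zero, zero_sub, neg_sq] at hcoord
  linarith

theorem subset_of_subset_union_of_monotone {α : Type*} {N T D : ℕ → Set α}
    (hN : ∀ t, N t ⊆ N (t + 1)) (hT0 : T 0 ⊆ N 0) (hT : ∀ t, T (t + 1) ⊆ T t ∪ D t)
    (hD : ∀ t, D t ⊆ N (t + 1)) : ∀ t, T t ⊆ N t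
  | 0 => hT0
  | t + 1 =>
    (hT t).trans (Set.union_subset
      ((subset_of_subset_union_of_monotone hN hT0 hT hD t).trans (hN t)) (hD t))

theorem no_false_additions_general
    (m : ℕ) (B : ℝ)
    (x xhat βhat : ℕ → Fin m → ℝ)
    (T : ℕ → Set (Fin m))
    (hN : ∀ t : ℕ, {i : Fin m | x t i ≠ 0} ⊆ {i : Fin m | x (t + 1) i ≠ 0})
    (hT0 : T 0 = ∅)
    (hxhat : ∀ t : ℕ, ∀ i : Fin m, i ∉ T t → xhat (t + 1) i = 0)
    (herr : ∀ t : ℕ, ∑ i, (x (t + 1) i - xhat (t + 1) i - βhat (t + 1) i) ^ 2 ≤ B)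
    (hTrec : ∀ t : ℕ,
      T (t + 1) = T t ∪ {i : Fin m | i ∉ T t ∧ B < (βhat (t + 1) i) ^ 2}) :
    ∀ t : ℕ,
      {i : Fin m | i ∉ T t ∧ B < (βhat (t + 1) i) ^ 2} ⊆ {i : Fin m | x (t + 1) i ≠ 0} ∧
      T (t + 1) ⊆ {i : Fin m | x (t + 1) i ≠ 0} ∧
      T (t + 1) ∪ ({i : Fin m | x (t + 2) i ≠ 0} \ T (t + 1)) =
        {i : Fin m | x (t + 2) i ≠ 0} := by
  have hΔ : ∀ t : ℕ,
      {i : Fin m | i ∉ T t ∧ B < (βhat (t + 1) i) ^ 2} ⊆ {i : Fin m | x (t + 1) i ≠ 0} :=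
    fun t i ⟨hiT, hiβ⟩ => ne_zero_of_sum_sq_le_of_lt_sq (herr t) (hxhat t i hiT) hiβ
  have hTN : ∀ t : ℕ, T t ⊆ {i : Fin m | x t i ≠ 0} :=
    subset_of_subset_union_of_monotone hN (hT0 ▸ Set.empty_subset _) (fun t => (hTrec t).le) hΔ
  intro t
  exact ⟨hΔ t, hTN (t + 1), Set.union_sdiff_cancel ((hTN (t + 1)).trans (hN (t + 1)))⟩

/-- **No false additions** (deterministic core of Lemma 2).
Supports `N t = {i | x t i ≠ 0}` are nondecreasing; `T 0 = ∅` and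
`T (t+1) = T t ∪ Δ̂ (t+1)` where `Δ̂ (t+1) = {i ∉ T t | (β̂ (t+1) i)² > B}`,
the estimate `x̂ (t+1)` vanishes off `T t`, and the error bound
`‖x (t+1) − x̂ (t+1) − β̂ (t+1)‖₂² ≤ B` holds.  Then for every time `t+1 ≥ 1`:
`Δ̂ (t+1) ⊆ N (t+1)`, `T (t+1) ⊆ N (t+1)` and
`T (t+1) ∪ (N (t+2) \ T (t+1)) = N (t+2)`. -/
theorem no_false_additions
    (m : ℕ) (hm : 0 < m) (B : ℝ) (hB : 0 ≤ B)
    (x xhat βhat : ℕ → Fin m → ℝ)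
    (T : ℕ → Set (Fin m))
    (hN : ∀ t : ℕ, {i : Fin m | x t i ≠ 0} ⊆ {i : Fin m | x (t + 1) i ≠ 0})
    (hT0 : T 0 = ∅)
    (hxhat : ∀ t : ℕ, ∀ i : Fin m, i ∉ T t → xhat (t + 1) i = 0)
    (herr : ∀ t : ℕ, ∑ i, (x (t + 1) i - xhat (t + 1) i - βhat (t + 1) i) ^ 2 ≤ B)
    (hTrec : ∀ t : ℕ,
      T (t + 1) = T t ∪ {i : Fin m | i ∉ T t ∧ B < (βhat (t + 1) i) ^ 2}) :
    ∀ t : ℕ,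
      {i : Fin m | i ∉ T t ∧ B < (βhat (t + 1) i) ^ 2} ⊆ {i : Fin m | x (t + 1) i ≠ 0} ∧
      T (t + 1) ⊆ {i : Fin m | x (t + 1) i ≠ 0} ∧
      T (t + 1) ∪ ({i : Fin m | x (t + 2) i ≠ 0} \ T (t + 1)) =
        {i : Fin m | x (t + 2) i ≠ 0} :=
  no_false_additions_general m B x xhat βhat T hN hT0 hxhat herr hTrec
end

section
/- Let m be a positive integer and B ≥ 0. Let x ∈ ℝ^m have support N := {i : x_i ≠ 0}, let T ⊆ {1,…,m} with T ⊆ N, let x̂ ∈ ℝ^m satisfy x̂_i = 0 for all i ∉ T, and let β̂ ∈ ℝ^m satisfy ‖x − x̂ − β̂‖₂² ≤ B. Define Δ := N \ T and Δ̂ := {i ∉ T : β̂_i² > B}. If x_i² > 4B for every i ∈ Δ, then Δ̂ = Δ, and consequently T ∪ Δ̂ = N. -/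
/-
Off `T` the estimate `x̂` vanishes, so there `(x i - β̂ i)² ≤ B`. Hence `β̂ i² ≤ B` where
`x i = 0`, while where `x i² > 4B` the inequality `a² ≤ 2(a - b)² + 2b²` forces `β̂ i² > B`.
-/

theorem lt_sq_of_sq_sub_le {a b B : ℝ} (hab : (a - b) ^ 2 ≤ B) (ha : 4 * B < a ^ 2) :
    B < b ^ 2 := by
  by_contra! hb
  have hsplit : a ^ 2 ≤ 2 * (a - b) ^ 2 + 2 * b ^ 2 := by nlinarith [sq_nonneg (a - 2 * b)]
  linarith

theorem lt_sq_iff_ne_zero_of_sq_sub_le {a b B : ℝ} (hab : (a - b) ^ 2 ≤ B)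
    (ha : a ≠ 0 → 4 * B < a ^ 2) : B < b ^ 2 ↔ a ≠ 0 := by
  refine ⟨?_, fun h => lt_sq_of_sq_sub_le hab (ha h)⟩
  rintro hb rfl
  rw [zero_sub, neg_sq] at hab
  linarith

theorem sq_le_of_sum_sq_le {ι : Type*} [Fintype ι] {f : ι → ℝ} {B : ℝ}
    (h : ∑ i, f i ^ 2 ≤ B) (i : ι) : f i ^ 2 ≤ B :=
  (Finset.single_le_sum (fun j _ => sq_nonneg (f j)) (Finset.mem_univ i)).trans h

theorem setOf_threshold_eq_support_diff {ι : Type*} [Fintype ι] {B : ℝ}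
    {x xhat βhat : ι → ℝ} {T : Set ι} (hxhat : ∀ i, i ∉ T → xhat i = 0)
    (herr : ∑ i, (x i - xhat i - βhat i) ^ 2 ≤ B)
    (hbig : ∀ i ∈ {i | x i ≠ 0} \ T, 4 * B < x i ^ 2) :
    {i | i ∉ T ∧ B < βhat i ^ 2} = {i | x i ≠ 0} \ T := by
  ext i
  simp only [Set.mem_ofPred_eq, Set.mem_sdiff]
  by_cases hi : i ∉ T
  · have hclose : (x i - βhat i) ^ 2 ≤ B := by
      simpa [hxhat i hi] using sq_le_of_sum_sq_le herr i
    rw [lt_sq_iff_ne_zero_of_sq_sub_le hclose fun hx => hbig i ⟨hx, hi⟩]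
    tauto
  · tauto

theorem exact_support_recovery_general
    (m : ℕ) (B : ℝ)
    (x xhat βhat : Fin m → ℝ) (T : Set (Fin m))
    (hTN : T ⊆ {i : Fin m | x i ≠ 0})
    (hxhat : ∀ i : Fin m, i ∉ T → xhat i = 0)
    (herr : ∑ i, (x i - xhat i - βhat i) ^ 2 ≤ B)
    (hbig : ∀ i ∈ {i : Fin m | x i ≠ 0} \ T, 4 * B < (x i) ^ 2) :
    {i : Fin m | i ∉ T ∧ B < (βhat i) ^ 2} = {i : Fin m | x i ≠ 0} \ T ∧
    T ∪ {i : Fin m | i ∉ T ∧ B < (βhat i) ^ 2} = {i : Fin m | x i ≠ 0} := by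
  have hΔ := setOf_threshold_eq_support_diff hxhat herr hbig
  exact ⟨hΔ, hΔ ▸ Set.union_sdiff_cancel hTN⟩

/-- **Exact support recovery** (Lemma 3): with support `N = {i | x i ≠ 0}`,
detected set `T ⊆ N`, estimate `x̂` vanishing off `T`, error bound
`‖x − x̂ − β̂‖₂² ≤ B`, undetected set `Δ = N \ T` and
`Δ̂ = {i ∉ T | β̂ i² > B}`:  if `x i² > 4B` for every `i ∈ Δ`, then `Δ̂ = Δ`
and `T ∪ Δ̂ = N`. -/
theorem exact_support_recovery
    (m : ℕ) (hm : 0 < m) (B : ℝ) (hB : 0 ≤ B)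
    (x xhat βhat : Fin m → ℝ) (T : Set (Fin m))
    (hTN : T ⊆ {i : Fin m | x i ≠ 0})
    (hxhat : ∀ i : Fin m, i ∉ T → xhat i = 0)
    (herr : ∑ i, (x i - xhat i - βhat i) ^ 2 ≤ B)
    (hbig : ∀ i ∈ {i : Fin m | x i ≠ 0} \ T, 4 * B < (x i) ^ 2) :
    {i : Fin m | i ∉ T ∧ B < (βhat i) ^ 2} = {i : Fin m | x i ≠ 0} \ T ∧
    T ∪ {i : Fin m | i ∉ T ∧ B < (βhat i) ^ 2} = {i : Fin m | x i ≠ 0} :=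
  exact_support_recovery_general m B x xhat βhat T hTN hxhat herr hbig
end

section
/- Let m be a positive integer, B > 0, σ > 0. Let N_* ⊆ {1,…,m} be a finite set and for each i ∈ N_* let t_i ≤ t_a be an integer (addition time). On a probability space, for each i ∈ N_* let (ν_{s,i})_{s≥1} be jointly independent Gaussian random variables with mean 0 and variance σ², and define the process x_{t,i} := Σ_{s=t_i+1}^{t} ν_{s,i} for t > t_i and x_{t,i} := 0 for t ≤ t_i; set x_{t,i} := 0 for all t when i ∉ N_*. Define random sets T_t ⊆ {1,…,m} by T_0 = ∅ and T_t = T_{t−1} ∪ Δ̂_t where, almost surely, at each t one is given a random vector x̂_t with x̂_{t,i} = 0 for i ∉ T_{t−1}, a random vector β̂_t with ‖x_t − x̂_t − β̂_t‖₂² ≤ B, and Δ̂_t := {i ∉ T_{t−1} : β̂_{t,i}² > B}. Then lim_{t→∞} P(T_{t+τ} = N_* for all τ ≥ 0) = 1. -/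
/-!
Thresholding can never add an index outside the true support (there `x̂ = x = 0`, so `β̂² ≤ B`),
and it adds every index `i` with `x_i² > 4B`, because then `β̂_i² > B`. So the estimated support
equals the true one from the first time every coordinate of `N_*` has left the band `x² ≤ 4B`.
A walk that stays in that band for `n` steps makes `n` independent steps with `ν² ≤ 16B`, an
event of probability `pⁿ` with `p < 1` since Gaussian steps have full support.
-/

open ProbabilityTheory MeasureTheory Filter
open scoped ENNReal NNReal

def IsThresholdStep {ι : Type*} [Fintype ι] (B : ℝ) (S : Set ι) (x xhat βhat : ι → ℝ)
    (S' : Set ι) : Prop :=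
  (∀ i, i ∉ S → xhat i = 0) ∧ ∑ i, (x i - xhat i - βhat i) ^ 2 ≤ B ∧
    S' = S ∪ {i | i ∉ S ∧ B < βhat i ^ 2}

namespace IsThresholdStep

variable {ι : Type*} [Fintype ι] {B : ℝ} {S S' : Set ι} {x xhat βhat : ι → ℝ}

theorem subset (h : IsThresholdStep B S x xhat βhat S') : S ⊆ S' :=
  h.2.2 ▸ Set.subset_union_left

theorem sq_sub_sub_le (h : IsThresholdStep B S x xhat βhat S') (i : ι) :
    (x i - xhat i - βhat i) ^ 2 ≤ B :=
  (Finset.single_le_sum (f := fun j => (x j - xhat j - βhat j) ^ 2)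
    (fun _ _ => sq_nonneg _) (Finset.mem_univ i)).trans h.2.1

theorem subset_of_subset {N : Set ι} (h : IsThresholdStep B S x xhat βhat S') (hS : S ⊆ N)
    (hx : ∀ i, i ∉ N → x i = 0) : S' ⊆ N := by
  rw [h.2.2]
  rintro i (hiS | ⟨hiS, hiB⟩)
  · exact hS hiS
  · by_contra hiN
    have hi := h.sq_sub_sub_le i
    rw [hx i hiN, h.1 i hiS] at hi
    linarith

theorem mem_of_four_mul_lt_sq (h : IsThresholdStep B S x xhat βhat S') {i : ι}
    (hi : 4 * B < x i ^ 2) : i ∈ S' := by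
  rw [h.2.2]
  by_cases hiS : i ∈ S
  · exact Or.inl hiS
  · refine Or.inr ⟨hiS, ?_⟩
    have hres := h.sq_sub_sub_le i
    rw [h.1 i hiS, sub_zero] at hres
    -- `x² ≤ 2 (x - β)² + 2 β²`
    nlinarith [sq_nonneg (x i - 2 * βhat i)]

end IsThresholdStep

section ThresholdSequence

variable {ι : Type*} [Fintype ι] {B : ℝ} {T : ℕ → Set ι} {x xhat βhat : ℕ → ι → ℝ}

theorem exists_forall_sq_le_of_isThresholdStep {N : Set ι} (hB : 0 ≤ B)
    (hstep : ∀ t, IsThresholdStep B (T t) (x (t + 1)) (xhat (t + 1)) (βhat (t + 1)) (T (t + 1)))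
    (hT0 : T 0 ⊆ N) (hx0 : ∀ i ∈ N, x 0 i = 0) (hxN : ∀ t, ∀ i, i ∉ N → x t i = 0) {t : ℕ}
    (hunstable : ¬ ∀ τ, T (t + τ) = N) : ∃ i ∈ N, ∀ s ≤ t, x s i ^ 2 ≤ 4 * B := by
  have hmono : Monotone T := monotone_nat_of_le_succ fun t => (hstep t).subset
  have hsub : ∀ t, T t ⊆ N := fun t => by
    induction t with
    | zero => exact hT0
    | succ t ih => exact (hstep t).subset_of_subset ih (hxN (t + 1))
  by_contra! hdet
  refine hunstable fun τ => (hsub _).antisymm fun i hi => ?_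
  obtain ⟨s, hst, hs⟩ := hdet i hi
  cases s with
  | zero => rw [hx0 i hi] at hs; linarith
  | succ s => exact hmono (by omega) ((hstep s).mem_of_four_mul_lt_sq hs)

end ThresholdSequence

section RandomWalk

variable {Ω : Type*} [MeasurableSpace Ω] {P : Measure Ω}

theorem ProbabilityTheory.iIndepFun.measure_biInter_preimage_eq_pow {ι β : Type*}
    [MeasurableSpace β] {f : ι → Ω → β} (hf : iIndepFun f P) {S : Finset ι} {μ : Measure β}
    (hmeas : ∀ j ∈ S, Measurable (f j)) (hlaw : ∀ j ∈ S, P.map (f j) = μ) {A : Set β}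
    (hA : MeasurableSet A) : P (⋂ j ∈ S, f j ⁻¹' A) = μ A ^ S.card := by
  rw [hf.measure_inter_preimage_eq_mul S (sets := fun _ => A) (fun _ _ => hA),
    ← Finset.prod_const]
  exact Finset.prod_congr rfl fun j hj => by rw [← hlaw j hj, Measure.map_apply (hmeas j hj) hA]

/-- A walk confined to `w² ≤ c` only makes steps with `ξ² ≤ 4c`. -/
theorem measure_forall_sq_le_le_pow {ξ w : ℕ → Ω → ℝ} {μ : Measure ℝ} (hξ : iIndepFun ξ P)
    (hmeas : ∀ k, Measurable (ξ k)) (hlaw : ∀ k, P.map (ξ k) = μ) {t₀ : ℕ}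
    (hw : ∀ k, t₀ ≤ k → ∀ ω, w (k + 1) ω = w k ω + ξ k ω) (c : ℝ) (t : ℕ) :
    P {ω | ∀ s ≤ t, w s ω ^ 2 ≤ c} ≤ μ {y | y ^ 2 ≤ 4 * c} ^ (t - t₀) := by
  have hsub : {ω | ∀ s ≤ t, w s ω ^ 2 ≤ c}
      ⊆ ⋂ k ∈ Finset.Ico t₀ t, ξ k ⁻¹' {y | y ^ 2 ≤ 4 * c} := by
    intro ω hω
    simp only [Set.mem_iInter, Finset.mem_Ico]
    rintro k ⟨hk₀, hkt⟩
    have hstep : ξ k ω = w (k + 1) ω - w k ω := by linarith [hw k hk₀ ω]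
    have h1 := hω (k + 1) hkt
    have h0 := hω k hkt.le
    change ξ k ω ^ 2 ≤ 4 * c
    rw [hstep]
    nlinarith [sq_nonneg (w (k + 1) ω + w k ω)]
  calc P {ω | ∀ s ≤ t, w s ω ^ 2 ≤ c}
      ≤ P (⋂ k ∈ Finset.Ico t₀ t, ξ k ⁻¹' {y | y ^ 2 ≤ 4 * c}) := measure_mono hsub
    _ = μ {y | y ^ 2 ≤ 4 * c} ^ (t - t₀) := by
      rw [hξ.measure_biInter_preimage_eq_pow (fun k _ => hmeas k) (fun k _ => hlaw k)
        (measurableSet_le (by fun_prop) measurable_const), Nat.card_Ico]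

end RandomWalk

theorem gaussianReal_lt_one_of_bddAbove (μ : ℝ) {v : ℝ≥0} (hv : v ≠ 0) {s : Set ℝ}
    (hs : MeasurableSet s) (hbdd : BddAbove s) : gaussianReal μ v s < 1 := by
  obtain ⟨a, ha⟩ := hbdd
  have hIoi : Set.Ioi a ⊆ sᶜ := fun y hy hys => (ha hys).not_gt hy
  have hcompl : gaussianReal μ v sᶜ ≠ 0 := fun h =>
    by simpa using gaussianReal_absolutelyContinuous' μ hv (measure_mono_null hIoi h)
  rw [prob_compl_eq_one_sub hs] at hcompl
  exact tsub_pos_iff_lt.mp (pos_iff_ne_zero.mpr hcompl)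

theorem bddAbove_setOf_sq_le (c : ℝ) : BddAbove {y : ℝ | y ^ 2 ≤ c} :=
  ⟨max c 1, fun y hy => by
    change y ^ 2 ≤ c at hy
    by_contra! h
    have h1 : 1 < y := (le_max_right c 1).trans_lt h
    have hc : c < y := (le_max_left c 1).trans_lt h
    nlinarith⟩

theorem tendsto_measure_one_of_tendsto_measure_compl {Ω α : Type*} [MeasurableSpace Ω]
    {P : Measure Ω} [IsProbabilityMeasure P] {l : Filter α} {s : α → Set Ω}
    (h : Tendsto (fun a => P (s a)ᶜ) l (nhds 0)) : Tendsto (fun a => P (s a)) l (nhds 1) := by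
  have hlow : Tendsto (fun a => 1 - P (s a)ᶜ) l (nhds 1) := by
    simpa using ENNReal.Tendsto.sub tendsto_const_nhds h (Or.inl ENNReal.one_ne_top)
  refine tendsto_of_tendsto_of_tendsto_of_le_of_le hlow tendsto_const_nhds (fun a => ?_)
    (fun _ => prob_le_one)
  calc 1 - P (s a)ᶜ = P Set.univ - P (s a)ᶜ := by rw [measure_univ]
    _ ≤ P (Set.univ \ (s a)ᶜ) := le_measure_sdiff
    _ = P (s a) := by rw [Set.sdiff_compl, Set.univ_inter]

/-- **Lemma 3 (finite detection delay).**
Each coefficient `i` in the final support `Nstar` is added at time `ti i ≤ ta`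
and thereafter evolves as a zero-mean Gaussian random walk
`x (t) i = ∑_{s = ti i + 1}^{t} ν s i` with per-step variance `σ²`, the steps
being jointly independent across time and coordinates; coefficients outside
`Nstar` are identically zero.  The estimated supports satisfy `T 0 = ∅` and,
almost surely at each time `t+1`, `T (t+1) = T t ∪ Δ̂ (t+1)` where
`Δ̂ (t+1) = {i ∉ T t | (β̂ (t+1) i)² > B}`, the estimate `x̂ (t+1)` vanishes
off `T t`, and `‖x (t+1) − x̂ (t+1) − β̂ (t+1)‖₂² ≤ B`.
Then `P(T (t+τ) = Nstar for all τ ≥ 0) → 1` as `t → ∞`. -/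
theorem kfcs_finite_detection_delay
    (m : ℕ) (B σ : ℝ) (hB : 0 < B) (hσ : 0 < σ)
    (Nstar : Set (Fin m)) (ta : ℕ) (ti : Fin m → ℕ)
    (hti : ∀ i ∈ Nstar, ti i ≤ ta)
    {Ω : Type*} [MeasurableSpace Ω] (P : Measure Ω) [IsProbabilityMeasure P]
    (ν : ℕ → Fin m → Ω → ℝ)
    (hmeas : ∀ s : ℕ, 1 ≤ s → ∀ i ∈ Nstar, Measurable (ν s i))
    (hgauss : ∀ s : ℕ, 1 ≤ s → ∀ i ∈ Nstar,
      P.map (ν s i) = gaussianReal 0 (σ ^ 2).toNNReal)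
    (hindep : iIndepFun
      (fun p : ℕ × ↥Nstar => ν (p.1 + 1) p.2) P)
    (x : ℕ → Ω → Fin m → ℝ)
    (hx : ∀ t : ℕ, ∀ ω : Ω, ∀ i ∈ Nstar,
      x t ω i = ∑ s ∈ Finset.Ioc (ti i) t, ν s i ω)
    (hx0 : ∀ t : ℕ, ∀ ω : Ω, ∀ i : Fin m, i ∉ Nstar → x t ω i = 0)
    (T : ℕ → Ω → Set (Fin m))
    (xhat βhat : ℕ → Ω → Fin m → ℝ)
    (hT0 : ∀ ω : Ω, T 0 ω = ∅)
    (halg : ∀ t : ℕ, ∀ᵐ ω ∂P,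
      (∀ i : Fin m, i ∉ T t ω → xhat (t + 1) ω i = 0) ∧
      (∑ i, (x (t + 1) ω i - xhat (t + 1) ω i - βhat (t + 1) ω i) ^ 2 ≤ B) ∧
      T (t + 1) ω = T t ω ∪ {i : Fin m | i ∉ T t ω ∧ B < (βhat (t + 1) ω i) ^ 2}) :
    Tendsto (fun t : ℕ => P {ω : Ω | ∀ τ : ℕ, T (t + τ) ω = Nstar})
      atTop (nhds 1) := by
  classical
  set p := gaussianReal 0 (σ ^ 2).toNNReal {y : ℝ | y ^ 2 ≤ 4 * (4 * B)}
  have hp : p < 1 := gaussianReal_lt_one_of_bddAbove 0 (by simpa using hσ.ne')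
    (measurableSet_le (by fun_prop) measurable_const) (bddAbove_setOf_sq_le _)
  have hundetected : ∀ i ∈ Nstar, ∀ t, P {ω | ∀ s ≤ t, x s ω i ^ 2 ≤ 4 * B} ≤ p ^ (t - ta) := by
    intro i hi t
    have hinj : Function.Injective fun k : ℕ => (k, (⟨i, hi⟩ : ↥Nstar)) := fun _ _ h => by
      simpa using h
    have hwalk : ∀ k, ti i ≤ k → ∀ ω, x (k + 1) ω i = x k ω i + ν (k + 1) i ω := fun k hk ω => by
      rw [hx _ ω i hi, hx _ ω i hi, Finset.sum_Ioc_succ_top hk]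
    refine (measure_forall_sq_le_le_pow (hindep.precomp hinj) (fun k => hmeas _ k.succ_pos i hi)
      (fun k => hgauss _ k.succ_pos i hi) hwalk _ t).trans ?_
    exact pow_le_pow_right_of_le_one' hp.le (by have := hti i hi; omega)
  have hcompl : ∀ t, P {ω | ∀ τ, T (t + τ) ω = Nstar}ᶜ ≤ Nstar.toFinset.card * p ^ (t - ta) := by
    intro t
    have hbad : {ω | ∀ τ, T (t + τ) ω = Nstar}ᶜ
        ≤ᵐ[P] ⋃ i ∈ Nstar.toFinset, {ω | ∀ s ≤ t, x s ω i ^ 2 ≤ 4 * B} := by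
      filter_upwards [ae_all_iff.mpr halg] with ω (hω : ∀ t, IsThresholdStep B (T t ω)
        (x (t + 1) ω) (xhat (t + 1) ω) (βhat (t + 1) ω) (T (t + 1) ω)) hunstable
      obtain ⟨i, hi, hstay⟩ := exists_forall_sq_le_of_isThresholdStep (T := (T · ω))
        (xhat := (xhat · ω)) (βhat := (βhat · ω)) hB.le hω (by simp [hT0])
        (fun i hi => by simp [hx 0 ω i hi]) (fun t => hx0 t ω) hunstable
      exact Set.mem_biUnion (Set.mem_toFinset.mpr hi) hstay
    refine (measure_mono_ae hbad).trans <| (measure_biUnion_finset_le _ _).trans ?_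
    simpa using Finset.sum_le_card_nsmul _ _ _ fun i hi =>
      hundetected i (Set.mem_toFinset.mp hi) t
  refine tendsto_measure_one_of_tendsto_measure_compl (tendsto_of_tendsto_of_tendsto_of_le_of_le
    tendsto_const_nhds ?_ (fun _ => zero_le) hcompl)
  simpa using ENNReal.Tendsto.const_mul ((ENNReal.tendsto_pow_atTop_nhds_zero_of_lt_one hp).comp
    (tendsto_sub_atTop_nat ta)) (Or.inr (ENNReal.natCast_ne_top _))
end

section
/- Let A₁ be a real n×k matrix and A₂ a real n×j matrix. Suppose ‖A₁c‖₂² ≥ (1−δ)‖c‖₂² for all c ∈ ℝ^k with 0 ≤ δ < 1, and suppose ‖A₁ᵀA₂‖ ≤ θ, where ‖·‖ denotes the operator (spectral) norm. Then for every z ∈ ℝ^j, ‖(A₁ᵀA₁)^{−1}A₁ᵀA₂ z‖₂ ≤ (θ/(1−δ))·‖z‖₂. -/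
/-!
Write `G = A₁ᵀA₁`. The hypothesis on `A₁` says `⟨c, G c⟩ = ‖A₁c‖² ≥ (1-δ)‖c‖²`, and Cauchy–Schwarz
turns this coercivity into `(1-δ)‖c‖ ≤ ‖G c‖`. Hence `G` is invertible and `‖G⁻¹w‖ ≤ ‖w‖/(1-δ)`;
applying this to `w = A₁ᵀA₂ z` with `‖w‖ ≤ θ‖z‖` gives the bound.
-/

open Matrix

namespace Matrix

variable {m ι : Type*} [Fintype m] [Fintype ι]

theorem dotProduct_transpose_mul_self_mulVec (A : Matrix m ι ℝ) (v : ι → ℝ) :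
    v ⬝ᵥ (Aᵀ * A) *ᵥ v = ∑ r, (A *ᵥ v) r ^ 2 := by
  rw [← mulVec_mulVec, dotProduct_mulVec, vecMul_transpose]
  simp only [dotProduct, sq]

theorem mul_sqrt_sum_sq_le_sqrt_sum_sq_mulVec {G : Matrix ι ι ℝ} {c : ℝ} {v : ι → ℝ}
    (hG : c * ∑ i, v i ^ 2 ≤ v ⬝ᵥ G *ᵥ v) :
    c * √(∑ i, v i ^ 2) ≤ √(∑ i, (G *ᵥ v) i ^ 2) := by
  set s := √(∑ i, v i ^ 2)
  set t := √(∑ i, (G *ᵥ v) i ^ 2)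
  have hs : s * s = ∑ i, v i ^ 2 := Real.mul_self_sqrt (Finset.sum_nonneg fun i _ => sq_nonneg _)
  have hcs : s * (c * s) ≤ s * t := by
    calc s * (c * s) = c * ∑ i, v i ^ 2 := by rw [← hs]; ring
      _ ≤ v ⬝ᵥ G *ᵥ v := hG
      _ ≤ s * t := Real.sum_mul_le_sqrt_mul_sqrt Finset.univ v (G *ᵥ v)
  rcases (Real.sqrt_nonneg _ : 0 ≤ s).eq_or_lt with hs0 | hs0
  · calc c * s = 0 := by simp [s, ← hs0]
      _ ≤ t := Real.sqrt_nonneg _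
  · exact le_of_mul_le_mul_left hcs hs0

theorem eq_zero_of_sqrt_sum_sq_eq_zero {v : ι → ℝ} (h : √(∑ i, v i ^ 2) = 0) : v = 0 := by
  rw [Real.sqrt_eq_zero (Finset.sum_nonneg fun i _ => sq_nonneg _),
    Fintype.sum_eq_zero_iff_of_nonneg fun i => sq_nonneg _] at h
  funext i
  simpa using congrFun h i

variable [DecidableEq ι]

theorem isUnit_of_mul_sqrt_sum_sq_le {G : Matrix ι ι ℝ} {c : ℝ} (hc : 0 < c)
    (hG : ∀ v, c * √(∑ i, v i ^ 2) ≤ √(∑ i, (G *ᵥ v) i ^ 2)) : IsUnit G := by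
  refine mulVec_injective_iff_isUnit.mp fun a b hab => sub_eq_zero.mp ?_
  have hker : G *ᵥ (a - b) = 0 := by rw [mulVec_sub, hab, sub_self]
  have hle := hG (a - b)
  rw [hker] at hle
  simp only [Pi.zero_apply, zero_pow two_ne_zero, Finset.sum_const_zero, Real.sqrt_zero] at hle
  exact eq_zero_of_sqrt_sum_sq_eq_zero <|
    le_antisymm (nonpos_of_mul_nonpos_right hle hc) (Real.sqrt_nonneg _)

theorem mul_sqrt_sum_sq_inv_mulVec_le {G : Matrix ι ι ℝ} {c : ℝ} (hc : 0 < c)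
    (hG : ∀ v, c * √(∑ i, v i ^ 2) ≤ √(∑ i, (G *ᵥ v) i ^ 2)) (w : ι → ℝ) :
    c * √(∑ i, (G⁻¹ *ᵥ w) i ^ 2) ≤ √(∑ i, w i ^ 2) := by
  have hdet : IsUnit G.det := (isUnit_iff_isUnit_det G).mp (isUnit_of_mul_sqrt_sum_sq_le hc hG)
  simpa only [mulVec_mulVec, mul_nonsing_inv G hdet, one_mulVec] using hG (G⁻¹ *ᵥ w)

end Matrix

theorem ls_bias_bound_general
    (n k j : ℕ) (A1 : Matrix (Fin n) (Fin k) ℝ) (A2 : Matrix (Fin n) (Fin j) ℝ)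
    (δ θ : ℝ) (hδ1 : δ < 1)
    (h1 : ∀ c : Fin k → ℝ, (1 - δ) * ∑ i, (c i) ^ 2 ≤ ∑ r, (A1.mulVec c r) ^ 2)
    (hθ : ∀ z : Fin j → ℝ,
      Real.sqrt (∑ i, ((A1ᵀ * A2).mulVec z i) ^ 2) ≤ θ * Real.sqrt (∑ i, (z i) ^ 2)) :
    ∀ z : Fin j → ℝ,
      Real.sqrt (∑ i, (((A1ᵀ * A1)⁻¹ * (A1ᵀ * A2)).mulVec z i) ^ 2)
        ≤ (θ / (1 - δ)) * Real.sqrt (∑ i, (z i) ^ 2) := by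
  intro z
  have hpos : 0 < 1 - δ := sub_pos.mpr hδ1
  have hgram (v : Fin k → ℝ) :
      (1 - δ) * √(∑ i, v i ^ 2) ≤ √(∑ i, ((A1ᵀ * A1) *ᵥ v) i ^ 2) :=
    mul_sqrt_sum_sq_le_sqrt_sum_sq_mulVec <| by
      rw [dotProduct_transpose_mul_self_mulVec]
      exact h1 v
  have hinv := mul_sqrt_sum_sq_inv_mulVec_le hpos hgram ((A1ᵀ * A2) *ᵥ z)
  rw [← mulVec_mulVec, div_mul_eq_mul_div, le_div_iff₀ hpos, mul_comm]
  exact hinv.trans (hθ z)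

/-- **Interference (bias) term bound** (Theorem 1): if
`‖A₁c‖₂² ≥ (1−δ)‖c‖₂²` for all `c` (`0 ≤ δ < 1`) and the operator norm of
`A₁ᵀA₂` is at most `θ` (i.e. `‖A₁ᵀA₂ z‖₂ ≤ θ ‖z‖₂` for all `z`), then
`‖(A₁ᵀA₁)⁻¹A₁ᵀA₂ z‖₂ ≤ (θ/(1−δ)) ‖z‖₂` for every `z`. -/
theorem ls_bias_bound
    (n k j : ℕ) (A1 : Matrix (Fin n) (Fin k) ℝ) (A2 : Matrix (Fin n) (Fin j) ℝ)
    (δ θ : ℝ) (hδ0 : 0 ≤ δ) (hδ1 : δ < 1)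
    (h1 : ∀ c : Fin k → ℝ, (1 - δ) * ∑ i, (c i) ^ 2 ≤ ∑ r, (A1.mulVec c r) ^ 2)
    (hθ : ∀ z : Fin j → ℝ,
      Real.sqrt (∑ i, ((A1ᵀ * A2).mulVec z i) ^ 2) ≤ θ * Real.sqrt (∑ i, (z i) ^ 2)) :
    ∀ z : Fin j → ℝ,
      Real.sqrt (∑ i, (((A1ᵀ * A1)⁻¹ * (A1ᵀ * A2)).mulVec z i) ^ 2)
        ≤ (θ / (1 - δ)) * Real.sqrt (∑ i, (z i) ^ 2) :=
  ls_bias_bound_general n k j A1 A2 δ θ hδ1 h1 hθ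
end
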